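/- arXiv:2208.05671 — 5 statements merged into one kernel-verified Lean document; each statement's English description precedes it below -/
import Mathlib

section
/- Let 1 < p < q be real numbers and let g : (0,∞) → (0,∞) satisfy condition (g). Then for all ε > 0 and all a, b > 0 one has g(a)·b ≤ ε·a·g(a) + max(ε^{1−p}, ε^{1−q})·b·g(b). -/
/-! Split according to whether `b ≤ ε a`. If so, the first term on the right already dominates
`g(a) b`. Otherwise `b / a > ε`, and it suffices to show `g(a) ≤ max(ε^{1-p}, ε^{1-q}) g(b)`:
for `a ≤ b` this follows from the lower growth bound with exponent `p - 1`, and for `b < a` from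
the upper growth bound with exponent `q - 1`, since `a / b < ε⁻¹`. -/

open Real

lemma le_rpow_neg_mul_of_rpow_div_le {r ε a b x y : ℝ} (hr : 0 ≤ r) (hε : 0 < ε) (ha : 0 < a)
    (hx : 0 < x) (hεab : ε * a ≤ b) (hlow : (b / a) ^ r ≤ y / x) :
    x ≤ ε ^ (-r) * y := by
  have hεr : ε ^ r ≤ y / x :=
    (rpow_le_rpow hε.le ((le_div_iff₀ ha).2 hεab) hr).trans hlow
  rw [rpow_neg hε.le, ← div_eq_inv_mul, le_div_iff₀ (rpow_pos_of_pos hε r)]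
  rw [le_div_iff₀ hx] at hεr
  linarith

lemma le_rpow_neg_mul_of_div_le_rpow {r ε a b x y : ℝ} (hr : 0 ≤ r) (hε : 0 < ε) (ha : 0 ≤ a)
    (hb : 0 < b) (hy : 0 < y) (hεab : ε * a ≤ b) (hup : x / y ≤ (a / b) ^ r) :
    x ≤ ε ^ (-r) * y := by
  have hab : a / b ≤ ε⁻¹ := by
    rw [div_le_iff₀ hb, inv_mul_eq_div, le_div_iff₀ hε]
    linarith
  have hxy : x / y ≤ ε ^ (-r) := calc
    x / y ≤ (a / b) ^ r := hup
    _ ≤ ε⁻¹ ^ r := rpow_le_rpow (by positivity) hab hr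
    _ = ε ^ (-r) := by rw [inv_rpow hε.le, rpow_neg hε.le]
  rwa [div_le_iff₀ hy] at hxy

lemma le_max_rpow_mul_of_mul_le {p q ε a b : ℝ} (hp : 1 ≤ p) (hq : 1 ≤ q) (g : ℝ → ℝ)
    (hgpos : ∀ v : ℝ, 0 < v → 0 < g v)
    (hg : ∀ v w : ℝ, 0 < v → v ≤ w →
      (w / v) ^ (p - 1) ≤ g w / g v ∧ g w / g v ≤ (w / v) ^ (q - 1))
    (hε : 0 < ε) (ha : 0 < a) (hb : 0 < b) (hεab : ε * a ≤ b) :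
    g a ≤ max (ε ^ (1 - p)) (ε ^ (1 - q)) * g b := by
  have hgb := hgpos b hb
  rcases le_or_gt a b with hab | hba
  · have h := le_rpow_neg_mul_of_rpow_div_le (sub_nonneg.2 hp) hε ha (hgpos a ha) hεab
      (hg a b ha hab).1
    rw [neg_sub] at h
    exact h.trans (mul_le_mul_of_nonneg_right (le_max_left _ _) hgb.le)
  · have h := le_rpow_neg_mul_of_div_le_rpow (sub_nonneg.2 hq) hε ha.le hb hgb hεab
      (hg b a hb hba.le).2
    rw [neg_sub] at h
    exact h.trans (mul_le_mul_of_nonneg_right (le_max_right _ _) hgb.le)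

/-- Young-type inequality (2.1) of the paper for a function satisfying condition (g). -/
theorem stmt_2 (p q : ℝ) (hp : 1 < p) (hpq : p < q)
    (g : ℝ → ℝ) (hgpos : ∀ v : ℝ, 0 < v → 0 < g v)
    (hg : ∀ v w : ℝ, 0 < v → v ≤ w →
      (w / v) ^ (p - 1) ≤ g w / g v ∧ g w / g v ≤ (w / v) ^ (q - 1)) :
    ∀ ε a b : ℝ, 0 < ε → 0 < a → 0 < b →
      g a * b ≤ ε * a * g a + max (ε ^ (1 - p)) (ε ^ (1 - q)) * b * g b := by
  intro ε a b hε ha hb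
  set M := max (ε ^ (1 - p)) (ε ^ (1 - q))
  have hga := hgpos a ha
  have hgb := hgpos b hb
  have hM : 0 < M := lt_max_of_lt_left (rpow_pos_of_pos hε _)
  rcases le_total b (ε * a) with hbεa | hεab
  · calc g a * b ≤ ε * a * g a := by nlinarith
      _ ≤ ε * a * g a + M * b * g b := le_add_of_nonneg_right (by positivity)
  · have key := le_max_rpow_mul_of_mul_le hp.le (hp.trans hpq).le g hgpos hg hε ha hb hεab
    calc g a * b ≤ M * b * g b := by nlinarith
      _ ≤ ε * a * g a + M * b * g b := le_add_of_nonneg_left (by positivity)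
end

section
/- Let n ≥ 1 and let h : [0,∞) → [0,∞) be continuous and non-decreasing with h(0) = 0 and h(v) > 0 for every v > 0. Define H(v) = ∫₀^v h(s) ds for v ≥ 0, and define the vector field F on ℝⁿ by F(ξ) = H(‖ξ‖)·ξ/‖ξ‖² for ξ ≠ 0 and F(0) = 0. Then for all ξ, η ∈ ℝⁿ with ξ ≠ η one has ⟨F(ξ) − F(η), ξ − η⟩ > 0, where ⟨·,·⟩ is the Euclidean inner product. -/
/-!
Write `ψ r = H r / r`, the mean value of `h` on `[0, r]`, so that `F ξ = (ψ ‖ξ‖ / ‖ξ‖) • ξ`.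
Since `h` is non-decreasing with `h 0 = 0 < h r`, the mean `ψ` is strictly increasing, and
Cauchy–Schwarz gives `⟪F ξ - F η, ξ - η⟫ ≥ (ψ ‖ξ‖ - ψ ‖η‖) * (‖ξ‖ - ‖η‖)`, which is positive
when the norms differ. When they agree, `F ξ - F η` is a positive multiple of `ξ - η`.
-/

open scoped RealInnerProductSpace

open Set intervalIntegral

section MonotoneIntegrand

variable {h : ℝ → ℝ} {a b : ℝ}

theorem sub_mul_le_integral_of_monotoneOn (hab : a ≤ b) (hmono : MonotoneOn h (Icc a b)) :
    (b - a) * h a ≤ ∫ s in a..b, h s := by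
  have hmono' : MonotoneOn h (uIcc a b) := by rwa [uIcc_of_le hab]
  simpa using integral_mono_on (μ := MeasureTheory.volume) hab intervalIntegrable_const
    hmono'.intervalIntegrable fun s hs => hmono (left_mem_Icc.2 hab) hs hs.1

theorem integral_lt_sub_mul_of_monotoneOn (hab : a < b) (hcont : ContinuousOn h (Icc a b))
    (hmono : MonotoneOn h (Icc a b)) (hlt : h a < h b) :
    ∫ s in a..b, h s < (b - a) * h b := by
  simpa using integral_lt_integral_of_continuousOn_of_le_of_exists_lt hab hcont
    continuousOn_const (fun s hs => hmono (Ioc_subset_Icc_self hs) (right_mem_Icc.2 hab.le) hs.2)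
    ⟨a, left_mem_Icc.2 hab.le, hlt⟩

theorem integral_div_lt_integral_div (ha : 0 < a) (hab : a < b)
    (hcont : ContinuousOn h (Icc 0 b)) (hmono : MonotoneOn h (Icc 0 b)) (hlt : h 0 < h a) :
    (∫ s in 0..a, h s) / a < (∫ s in 0..b, h s) / b := by
  have hsplit : ∫ s in 0..b, h s = (∫ s in 0..a, h s) + ∫ s in a..b, h s :=
    (integral_add_adjacent_intervals
      (hcont.mono (Icc_subset_Icc_right hab.le) |>.intervalIntegrable_of_Icc ha.le)
      (hcont.mono (Icc_subset_Icc_left ha.le) |>.intervalIntegrable_of_Icc hab.le)).symm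
  have hhead := integral_lt_sub_mul_of_monotoneOn ha
    (hcont.mono (Icc_subset_Icc_right hab.le)) (hmono.mono (Icc_subset_Icc_right hab.le)) hlt
  have htail := sub_mul_le_integral_of_monotoneOn hab.le (hmono.mono (Icc_subset_Icc_left ha.le))
  rw [div_lt_div_iff₀ ha (ha.trans hab), hsplit]
  nlinarith [mul_lt_mul_of_pos_right hhead (sub_pos.2 hab)]

theorem strictMonoOn_integral_div (hcont : ContinuousOn h (Ici 0)) (hmono : MonotoneOn h (Ici 0))
    (h0 : h 0 = 0) (hpos : ∀ v, 0 < v → 0 < h v) :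
    StrictMonoOn (fun r => (∫ s in 0..r, h s) / r) (Ici 0) := by
  intro a ha b hb hab
  rcases (mem_Ici.1 ha).eq_or_lt with rfl | ha
  · have hb : 0 < b := hab
    simpa using div_pos (intervalIntegral_pos_of_pos_on
      (hcont.mono Icc_subset_Ici_self |>.intervalIntegrable_of_Icc hb.le)
      (fun s hs => hpos s hs.1) hb) hb
  · exact integral_div_lt_integral_div ha hab (hcont.mono Icc_subset_Ici_self)
      (hmono.mono Icc_subset_Ici_self) (by simpa [h0] using hpos a ha)

end MonotoneIntegrand

theorem StrictMonoOn.sub_mul_sub_pos {f : ℝ → ℝ} {s : Set ℝ} (hf : StrictMonoOn f s) {a b : ℝ}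
    (ha : a ∈ s) (hb : b ∈ s) (hab : a ≠ b) : 0 < (f a - f b) * (a - b) := by
  rcases hab.lt_or_gt with hab | hab
  · exact mul_pos_of_neg_of_neg (sub_neg.2 (hf ha hb hab)) (sub_neg.2 hab)
  · exact mul_pos (sub_pos.2 (hf hb ha hab)) (sub_pos.2 hab)

theorem mul_sub_le_inner_smul_sub_smul {E : Type*} [NormedAddCommGroup E]
    [InnerProductSpace ℝ E] {c d : ℝ} (hc : 0 ≤ c) (hd : 0 ≤ d) (x y : E) :
    (c * ‖x‖ - d * ‖y‖) * (‖x‖ - ‖y‖) ≤ ⟪c • x - d • y, x - y⟫ := by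
  have hexpand : ⟪c • x - d • y, x - y⟫ = c * ‖x‖ ^ 2 - (c + d) * ⟪x, y⟫ + d * ‖y‖ ^ 2 := by
    simp only [inner_sub_left, inner_sub_right, real_inner_smul_left, real_inner_self_eq_norm_sq,
      real_inner_comm x y]
    ring
  rw [hexpand]
  nlinarith [mul_le_mul_of_nonneg_left (real_inner_le_norm x y) (add_nonneg hc hd)]

theorem stmt_3_general (n : ℕ)
    (h : ℝ → ℝ)
    (hcont : ContinuousOn h (Set.Ici 0))
    (hmono : MonotoneOn h (Set.Ici 0))
    (h0 : h 0 = 0) (hpos : ∀ v : ℝ, 0 < v → 0 < h v)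
    (H : ℝ → ℝ) (hH : ∀ v : ℝ, 0 ≤ v → H v = ∫ s in (0:ℝ)..v, h s)
    (F : EuclideanSpace ℝ (Fin n) → EuclideanSpace ℝ (Fin n))
    (hF0 : F 0 = 0)
    (hF : ∀ ξ : EuclideanSpace ℝ (Fin n), ξ ≠ 0 → F ξ = (H ‖ξ‖ / ‖ξ‖ ^ 2) • ξ) :
    ∀ ξ η : EuclideanSpace ℝ (Fin n), ξ ≠ η → 0 < ⟪F ξ - F η, ξ - η⟫ := by
  intro ξ η hne
  have hF' : ∀ ξ, F ξ = (H ‖ξ‖ / ‖ξ‖ ^ 2) • ξ := fun ξ => by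
    rcases eq_or_ne ξ 0 with rfl | hξ
    · simp [hF0]
    · exact hF ξ hξ
  have hmean : StrictMonoOn (fun r => H r / r) (Ici 0) :=
    (strictMonoOn_integral_div hcont hmono h0 hpos).congr fun r hr => by simp [hH r hr]
  have hHpos : ∀ r, 0 < r → 0 < H r := fun r hr =>
    (div_pos_iff_of_pos_right hr).1 (by simpa using hmean self_mem_Ici hr.le hr)
  have hcoef : ∀ r, 0 ≤ r → 0 ≤ H r / r ^ 2 := fun r hr => by
    rcases hr.eq_or_lt with rfl | hr
    · simp
    · exact (div_pos (hHpos r hr) (by positivity)).le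
  have hcoef_mul : ∀ r, H r / r ^ 2 * r = H r / r := fun r => by
    rcases eq_or_ne r 0 with rfl | hr
    · simp
    · field_simp
  rw [hF' ξ, hF' η]
  rcases eq_or_ne ‖ξ‖ ‖η‖ with hnorm | hnorm
  · have hη : 0 < ‖η‖ := by
      refine (norm_nonneg η).lt_of_ne' fun hη => hne ?_
      rw [norm_eq_zero.1 hη, ← norm_eq_zero, hnorm, hη]
    rw [hnorm, ← smul_sub, real_inner_smul_left, real_inner_self_eq_norm_sq]
    exact mul_pos (div_pos (hHpos _ hη) (by positivity))
      (pow_pos (norm_pos_iff.2 (sub_ne_zero.2 hne)) 2)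
  · calc 0 < (H ‖ξ‖ / ‖ξ‖ - H ‖η‖ / ‖η‖) * (‖ξ‖ - ‖η‖) :=
          hmean.sub_mul_sub_pos (norm_nonneg ξ) (norm_nonneg η) hnorm
      _ = (H ‖ξ‖ / ‖ξ‖ ^ 2 * ‖ξ‖ - H ‖η‖ / ‖η‖ ^ 2 * ‖η‖) * (‖ξ‖ - ‖η‖) := by
          rw [hcoef_mul, hcoef_mul]
      _ ≤ _ :=
          mul_sub_le_inner_smul_sub_smul (hcoef _ (norm_nonneg ξ)) (hcoef _ (norm_nonneg η)) ξ η

/-- Strict monotonicity of the operator `ξ ↦ H(|ξ|) ξ / |ξ|²` from Section 3 of the paper. -/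
theorem stmt_3 (n : ℕ) (hn : 1 ≤ n)
    (h : ℝ → ℝ)
    (hcont : ContinuousOn h (Set.Ici 0))
    (hmono : MonotoneOn h (Set.Ici 0))
    (h0 : h 0 = 0) (hpos : ∀ v : ℝ, 0 < v → 0 < h v)
    (H : ℝ → ℝ) (hH : ∀ v : ℝ, 0 ≤ v → H v = ∫ s in (0:ℝ)..v, h s)
    (F : EuclideanSpace ℝ (Fin n) → EuclideanSpace ℝ (Fin n))
    (hF0 : F 0 = 0)
    (hF : ∀ ξ : EuclideanSpace ℝ (Fin n), ξ ≠ 0 → F ξ = (H ‖ξ‖ / ‖ξ‖ ^ 2) • ξ) :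
    ∀ ξ η : EuclideanSpace ℝ (Fin n), ξ ≠ η → 0 < ⟪F ξ - F η, ξ - η⟫ :=
  stmt_3_general n h hcont hmono h0 hpos H hH F hF0 hF
end

section
/- Let 1 < p < q and t > 0 be real numbers with 1/(t+1) < (p−1)/q, and set δ = t/(t+1). Let ḡ : (0,∞) → (0,∞) be differentiable on (0,∞) and satisfy (p−1)·ḡ(v) ≤ v·ḡ′(v) ≤ (q−1)·ḡ(v) for every v > 0. Define Ḡ(v) = ∫₀^v ḡ(s) ds for v > 0 (the integral is finite since ḡ(s) ≤ ḡ(v)(s/v)^{p−1} for 0 < s ≤ v). Then the function Q(v) = [Ḡ(v)]^δ is convex on (0,∞). -/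
/-!
The growth condition `(p-1) ḡ ≤ v ḡ' ≤ (q-1) ḡ` says that `ḡ(s) s^{-(p-1)}` is nondecreasing and
`ḡ(s) s^{-(q-1)}` is nonincreasing. The first makes `ḡ` integrable at `0`; the second gives
`Ḡ(v) ≥ v ḡ(v) / q`. Hence `ḡ' Ḡ ≥ ((p-1)/q) ḡ² > (1-δ) ḡ²`, and this is exactly the sign of
`Q'' = δ Ḡ^{δ-2} (ḡ' Ḡ - (1-δ) ḡ²)`.
-/

open Set MeasureTheory intervalIntegral

section PowerGrowth

variable {g g' : ℝ → ℝ} {c : ℝ}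

lemma hasDerivAt_mul_rpow_neg {v : ℝ} (hv : 0 < v) (hg : HasDerivAt g (g' v) v) :
    HasDerivAt (fun s => g s * s ^ (-c)) (v ^ (-c - 1) * (v * g' v - c * g v)) v := by
  refine (hg.mul (Real.hasDerivAt_rpow_const (p := -c) (Or.inl hv.ne'))).congr_deriv ?_
  rw [show v ^ (-c) = v ^ (-c - 1) * v by rw [← Real.rpow_add_one hv.ne']; ring_nf]
  ring

lemma monotoneOn_mul_rpow_neg (hg : ∀ v, 0 < v → HasDerivAt g (g' v) v)
    (hc : ∀ v, 0 < v → c * g v ≤ v * g' v) :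
    MonotoneOn (fun s => g s * s ^ (-c)) (Ioi 0) := by
  refine monotoneOn_of_hasDerivWithinAt_nonneg (convex_Ioi 0)
    (f' := fun v => v ^ (-c - 1) * (v * g' v - c * g v))
    (fun v hv => (hasDerivAt_mul_rpow_neg hv (hg v hv)).continuousAt.continuousWithinAt)
    (fun v hv => ?_) fun v hv => ?_ <;> simp only [interior_Ioi, mem_Ioi] at hv ⊢
  · exact (hasDerivAt_mul_rpow_neg hv (hg v hv)).hasDerivWithinAt
  · exact mul_nonneg (Real.rpow_nonneg hv.le _) (sub_nonneg.2 (hc v hv))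

lemma antitoneOn_mul_rpow_neg (hg : ∀ v, 0 < v → HasDerivAt g (g' v) v)
    (hc : ∀ v, 0 < v → v * g' v ≤ c * g v) :
    AntitoneOn (fun s => g s * s ^ (-c)) (Ioi 0) := by
  refine antitoneOn_of_hasDerivWithinAt_nonpos (convex_Ioi 0)
    (f' := fun v => v ^ (-c - 1) * (v * g' v - c * g v))
    (fun v hv => (hasDerivAt_mul_rpow_neg hv (hg v hv)).continuousAt.continuousWithinAt)
    (fun v hv => ?_) fun v hv => ?_ <;> simp only [interior_Ioi, mem_Ioi] at hv ⊢
  · exact (hasDerivAt_mul_rpow_neg hv (hg v hv)).hasDerivWithinAt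
  · exact mul_nonpos_of_nonneg_of_nonpos (Real.rpow_nonneg hv.le _) (sub_nonpos.2 (hc v hv))

lemma mul_rpow_neg_mul_rpow {s : ℝ} (hs : 0 < s) (a : ℝ) : a * s ^ (-c) * s ^ c = a := by
  rw [mul_assoc, ← Real.rpow_add hs, neg_add_cancel, Real.rpow_zero, mul_one]

lemma le_mul_rpow_of_le_mul_deriv (hg : ∀ v, 0 < v → HasDerivAt g (g' v) v)
    (hc : ∀ v, 0 < v → c * g v ≤ v * g' v) {s v : ℝ} (hs : 0 < s) (hsv : s ≤ v) :
    g s ≤ g v * v ^ (-c) * s ^ c := by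
  calc g s = g s * s ^ (-c) * s ^ c := (mul_rpow_neg_mul_rpow hs _).symm
    _ ≤ g v * v ^ (-c) * s ^ c := by
      gcongr ?_ * _
      exact monotoneOn_mul_rpow_neg hg hc hs (hs.trans_le hsv) hsv

lemma mul_rpow_le_of_mul_deriv_le (hg : ∀ v, 0 < v → HasDerivAt g (g' v) v)
    (hc : ∀ v, 0 < v → v * g' v ≤ c * g v) {s v : ℝ} (hs : 0 < s) (hsv : s ≤ v) :
    g v * v ^ (-c) * s ^ c ≤ g s := by
  calc g v * v ^ (-c) * s ^ c ≤ g s * s ^ (-c) * s ^ c := by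
        gcongr ?_ * _
        exact antitoneOn_mul_rpow_neg hg hc hs (hs.trans_le hsv) hsv
    _ = g s := mul_rpow_neg_mul_rpow hs _

lemma intervalIntegrable_of_le_mul_deriv (hc₁ : -1 < c) (hg₀ : ∀ v, 0 < v → 0 ≤ g v)
    (hg : ∀ v, 0 < v → HasDerivAt g (g' v) v) (hc : ∀ v, 0 < v → c * g v ≤ v * g' v)
    {v : ℝ} (hv : 0 < v) : IntervalIntegrable g volume 0 v := by
  have hbound : IntervalIntegrable (fun s => g v * v ^ (-c) * s ^ c) volume 0 v :=
    (intervalIntegrable_rpow' hc₁).const_mul _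
  rw [intervalIntegrable_iff_integrableOn_Ioc_of_le hv.le] at hbound ⊢
  have hcont : ContinuousOn g (Ioc 0 v) := fun s hs =>
    (hg s hs.1).continuousAt.continuousWithinAt
  refine hbound.mono' (hcont.aestronglyMeasurable measurableSet_Ioc)
    ((ae_restrict_iff' measurableSet_Ioc).2 (Filter.Eventually.of_forall fun s hs => ?_))
  rw [Real.norm_eq_abs, abs_of_nonneg (hg₀ s hs.1)]
  exact le_mul_rpow_of_le_mul_deriv hg hc hs.1 hs.2

lemma mul_div_le_integral_of_mul_deriv_le {q : ℝ} (hq : 0 < q)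
    (hg : ∀ v, 0 < v → HasDerivAt g (g' v) v) (hc : ∀ v, 0 < v → v * g' v ≤ (q - 1) * g v)
    {v : ℝ} (hv : 0 < v) (hint : IntervalIntegrable g volume 0 v) :
    v * g v / q ≤ ∫ s in 0..v, g s := by
  have hq₁ : -1 < q - 1 := by linarith
  calc v * g v / q = ∫ s in 0..v, g v * v ^ (-(q - 1)) * s ^ (q - 1) := by
        rw [intervalIntegral.integral_const_mul, integral_rpow (Or.inl hq₁), sub_add_cancel,
          Real.zero_rpow hq.ne', sub_zero, mul_div_assoc', mul_assoc,
          ← Real.rpow_add hv, show -(q - 1) + q = 1 by ring, Real.rpow_one, mul_comm]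
    _ ≤ ∫ s in 0..v, g s :=
      integral_mono_on_of_le_Ioo hv.le ((intervalIntegrable_rpow' hq₁).const_mul _) hint
        fun s hs => mul_rpow_le_of_mul_deriv_le hg hc hs.1 hs.2.le

end PowerGrowth

lemma convexOn_rpow_of_sq_le_deriv_mul {D : Set ℝ} (hD : Convex ℝ D) (hDo : IsOpen D)
    {F f f' : ℝ → ℝ} {δ : ℝ} (hδ : 0 ≤ δ) (hF : ∀ x ∈ D, HasDerivAt F (f x) x)
    (hf : ∀ x ∈ D, HasDerivAt f (f' x) x) (hF₀ : ∀ x ∈ D, 0 < F x)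
    (hkey : ∀ x ∈ D, (1 - δ) * f x ^ 2 ≤ f' x * F x) :
    ConvexOn ℝ D (fun x => F x ^ δ) := by
  have hQ : ∀ x ∈ D, HasDerivAt (fun x => F x ^ δ) (f x * δ * F x ^ (δ - 1)) x :=
    fun x hx => (hF x hx).rpow_const (Or.inl (hF₀ x hx).ne')
  have hQ' : ∀ x ∈ D, HasDerivAt (fun x => f x * δ * F x ^ (δ - 1))
      (f' x * δ * F x ^ (δ - 1) + f x * δ * (f x * (δ - 1) * F x ^ (δ - 1 - 1))) x :=
    fun x hx => ((hf x hx).mul_const δ).mul ((hF x hx).rpow_const (Or.inl (hF₀ x hx).ne'))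
  refine convexOn_of_hasDerivWithinAt2_nonneg hD (f' := fun x => f x * δ * F x ^ (δ - 1))
    (f'' := fun x => f' x * δ * F x ^ (δ - 1) + f x * δ * (f x * (δ - 1) * F x ^ (δ - 1 - 1)))
    (fun x hx => (hQ x hx).continuousAt.continuousWithinAt) (fun x hx => ?_) (fun x hx => ?_)
    fun x hx => ?_ <;> simp only [hDo.interior_eq] at hx ⊢
  · exact (hQ x hx).hasDerivWithinAt
  · exact (hQ' x hx).hasDerivWithinAt
  · have hpow : F x ^ (δ - 1) = F x ^ (δ - 1 - 1) * F x := by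
      rw [← Real.rpow_add_one (hF₀ x hx).ne']; ring_nf
    calc 0 ≤ δ * F x ^ (δ - 1 - 1) * (f' x * F x - (1 - δ) * f x ^ 2) :=
          mul_nonneg (mul_nonneg hδ (Real.rpow_pos_of_pos (hF₀ x hx) _).le)
            (sub_nonneg.2 (hkey x hx))
      _ = _ := by rw [hpow]; ring

theorem stmt_6_general (p q t : ℝ) (hp : 1 < p) (ht : 0 < t)
    (htpq : 1 / (t + 1) < (p - 1) / q)
    (g : ℝ → ℝ) (hgpos : ∀ v : ℝ, 0 < v → 0 < g v)
    (hgdiff : ∀ v : ℝ, 0 < v → DifferentiableAt ℝ g v)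
    (hg : ∀ v : ℝ, 0 < v →
      (p - 1) * g v ≤ v * deriv g v ∧ v * deriv g v ≤ (q - 1) * g v)
    (G : ℝ → ℝ) (hG : ∀ v : ℝ, 0 < v → G v = ∫ s in (0:ℝ)..v, g s) :
    ConvexOn ℝ (Set.Ioi 0) (fun v => G v ^ (t / (t + 1))) := by
  have hq : 0 < q :=
    (div_pos_iff_of_pos_left (by linarith)).1 ((one_div_pos.2 (by linarith)).trans htpq)
  have hg' : ∀ v, 0 < v → HasDerivAt g (deriv g v) v := fun v hv => (hgdiff v hv).hasDerivAt
  have hint : ∀ v, 0 < v → IntervalIntegrable g volume 0 v := fun v hv =>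
    intervalIntegrable_of_le_mul_deriv (by linarith) (fun u hu => (hgpos u hu).le) hg'
      (fun u hu => (hg u hu).1) hv
  have hGderiv : ∀ v ∈ Ioi (0 : ℝ), HasDerivAt (fun u => ∫ s in 0..u, g s) (g v) v :=
    fun v hv => integral_hasDerivAt_right (hint v hv) (ContinuousOn.stronglyMeasurableAtFilter
      isOpen_Ioi (fun u hu => (hgdiff u hu).continuousAt.continuousWithinAt) v hv)
      (hgdiff v hv).continuousAt
  have hGpos : ∀ v ∈ Ioi (0 : ℝ), 0 < ∫ s in 0..v, g s := fun v hv =>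
    intervalIntegral_pos_of_pos_on (hint v hv) (fun u hu => hgpos u hu.1) hv
  have hkey : ∀ v ∈ Ioi (0 : ℝ),
      (1 - t / (t + 1)) * g v ^ 2 ≤ deriv g v * ∫ s in 0..v, g s := by
    intro v (hv : 0 < v)
    have hGv := mul_div_le_integral_of_mul_deriv_le hq hg' (fun u hu => (hg u hu).2) hv (hint v hv)
    have hderiv : (p - 1) * g v / v ≤ deriv g v := by
      rw [div_le_iff₀ hv, mul_comm _ v]; exact (hg v hv).1
    have hpg : 0 < (p - 1) * g v / v := div_pos (mul_pos (by linarith) (hgpos v hv)) hv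
    calc (1 - t / (t + 1)) * g v ^ 2 = 1 / (t + 1) * g v ^ 2 := by field_simp; ring
      _ ≤ (p - 1) / q * g v ^ 2 := by gcongr
      _ = (p - 1) * g v / v * (v * g v / q) := by field_simp
      _ ≤ deriv g v * ∫ s in 0..v, g s :=
        mul_le_mul hderiv hGv (div_pos (mul_pos hv (hgpos v hv)) hq).le (hpg.le.trans hderiv)
  exact (convexOn_rpow_of_sq_le_deriv_mul (convex_Ioi 0) isOpen_Ioi (by positivity) hGderiv
    hg' hGpos hkey).congr fun v hv => by simp only [hG v hv]

/-- Convexity of `Q = Ḡ^δ`, `δ = t/(t+1)`, from the beginning of Section 3.3 of the paper. -/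
theorem stmt_6 (p q t : ℝ) (hp : 1 < p) (hpq : p < q) (ht : 0 < t)
    (htpq : 1 / (t + 1) < (p - 1) / q)
    (g : ℝ → ℝ) (hgpos : ∀ v : ℝ, 0 < v → 0 < g v)
    (hgdiff : ∀ v : ℝ, 0 < v → DifferentiableAt ℝ g v)
    (hg : ∀ v : ℝ, 0 < v →
      (p - 1) * g v ≤ v * deriv g v ∧ v * deriv g v ≤ (q - 1) * g v)
    (G : ℝ → ℝ) (hG : ∀ v : ℝ, 0 < v → G v = ∫ s in (0:ℝ)..v, g s) :
    ConvexOn ℝ (Set.Ioi 0) (fun v => G v ^ (t / (t + 1))) :=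
  stmt_6_general p q t hp ht htpq g hgpos hgdiff hg G hG
end

section
/- Let n ≥ 1. There exists a constant γ > 0 depending only on n with the following property: for every y ∈ ℝⁿ, every r > 0, every function u that is continuously differentiable on the closed ball of radius r centered at y, and all real numbers k < l, one has (l − k) · |A_{k,r}| · |B_r(y) ∖ A_{l,r}| ≤ γ · r^{n+1} · ∫_{A_{l,r} ∖ A_{k,r}} ‖∇u(x)‖ dx, where B_r(y) is the open ball of radius r centered at y, A_{m,r} = {x ∈ B_r(y) : u(x) < m} for a real number m, |·| denotes n-dimensional Lebesgue measure, and ∇u is the gradient of u. -/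
/-!
If `u(x) < k` and `u(z) ≥ l`, then along the segment from `x` to `z` the function `u` crosses
from level `k` to level `l` inside the band `{k ≤ u < l}`, so by the fundamental theorem of
calculus `l - k ≤ |z - x| ∫₀¹ 1_band |∇u|(x + t(z - x)) dt ≤ 2r ∫₀¹ … dt`. Integrating over
`x ∈ {u < k}` and `z ∈ {u ≥ l}` and exchanging the order of integration, it remains to bound, for
each `t`, the double integral of `1_band |∇u|(x + t(z - x))`. For `t ≥ 1/2` the substitution in `z`
has Jacobian `t⁻ⁿ ≤ 2ⁿ`, for `t < 1/2` the substitution in `x` has Jacobian `(1 - t)⁻ⁿ ≤ 2ⁿ`;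
either way the double integral is at most `2ⁿ |B_r| ∫_band |∇u|`.
-/

open MeasureTheory Metric Set Module
open scoped ENNReal

theorem exists_Ioo_strictly_between_levels {f : ℝ → ℝ} {p q k l : ℝ} (hpq : p ≤ q)
    (hf : ContinuousOn f (Icc p q)) (hp : f p ≤ k) (hq : l ≤ f q) (hkl : k < l) :
    ∃ a b, p ≤ a ∧ a < b ∧ b ≤ q ∧ f a ≤ k ∧ l ≤ f b ∧ ∀ t ∈ Ioo a b, k < f t ∧ f t < l := by
  obtain ⟨b, ⟨⟨hpb, hbq⟩, hfb⟩, hb_least⟩ : ∃ b, IsLeast (Icc p q ∩ f ⁻¹' Ici l) b :=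
    (isCompact_Icc.of_isClosed_subset
      (hf.preimage_isClosed_of_isClosed isClosed_Icc isClosed_Ici) inter_subset_left).exists_isLeast
      ⟨q, ⟨hpq, le_rfl⟩, hq⟩
  obtain ⟨a, ⟨⟨hpa, hab⟩, hfa⟩, ha_greatest⟩ : ∃ a, IsGreatest (Icc p b ∩ f ⁻¹' Iic k) a :=
    (isCompact_Icc.of_isClosed_subset
      ((hf.mono (Icc_subset_Icc_right hbq)).preimage_isClosed_of_isClosed isClosed_Icc
        isClosed_Iic) inter_subset_left).exists_isGreatest ⟨p, ⟨le_rfl, hpb⟩, hp⟩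
  have hab : a < b := hab.lt_of_ne (by rintro rfl; exact (hkl.trans_le hfb).not_ge hfa)
  refine ⟨a, b, hpa, hab, hbq, hfa, hfb, fun t ⟨hat, htb⟩ => ⟨?_, ?_⟩⟩
  · by_contra! h
    exact hat.not_ge (ha_greatest ⟨⟨hpa.trans hat.le, htb.le⟩, h⟩)
  · by_contra! h
    exact htb.not_ge (hb_least ⟨⟨hpa.trans hat.le, htb.le.trans hbq⟩, h⟩)

theorem lintegral_lintegral_lintegral_rotate {α β γ : Type*} [MeasurableSpace α]
    [MeasurableSpace β] [MeasurableSpace γ] {μ : Measure α} {ν : Measure β} {ρ : Measure γ}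
    [SFinite μ] [SFinite ν] [SFinite ρ] {F : α → β → γ → ℝ≥0∞}
    (hF : Measurable fun p : α × β × γ => F p.1 p.2.1 p.2.2) :
    ∫⁻ x, ∫⁻ y, ∫⁻ t, F x y t ∂ρ ∂ν ∂μ = ∫⁻ t, ∫⁻ x, ∫⁻ y, F x y t ∂ν ∂μ ∂ρ := by
  calc ∫⁻ x, ∫⁻ y, ∫⁻ t, F x y t ∂ρ ∂ν ∂μ = ∫⁻ x, ∫⁻ t, ∫⁻ y, F x y t ∂ν ∂ρ ∂μ :=
        lintegral_congr fun x => lintegral_lintegral_swap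
          (hF.comp (by fun_prop : Measurable fun q : β × γ => (x, q))).aemeasurable
    _ = ∫⁻ t, ∫⁻ x, ∫⁻ y, F x y t ∂ν ∂μ ∂ρ := lintegral_lintegral_swap
          (Measurable.lintegral_prod_right' (f := fun q : (α × γ) × β => F q.1.1 q.2 q.1.2)
            (hF.comp (f := fun q : (α × γ) × β => (q.1.1, q.2, q.1.2)) (by fun_prop))).aemeasurable

theorem ofReal_sub_le_edist_mul_lintegral_segment {E : Type*} [NormedAddCommGroup E]
    [NormedSpace ℝ E] {u : E → ℝ} {Ω : Set E} (hΩ : IsOpen Ω) (hΩc : Convex ℝ Ω)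
    (hu : ContDiffOn ℝ 1 u Ω) {x z : E} {k l : ℝ} (hx : x ∈ Ω) (hz : z ∈ Ω) (hxk : u x ≤ k)
    (hzl : l ≤ u z) (hkl : k < l) :
    ENNReal.ofReal (l - k) ≤ edist x z * ∫⁻ t in Ioo (0 : ℝ) 1,
      ({w ∈ Ω | u w < l} \ {w ∈ Ω | u w < k}).indicator (‖fderiv ℝ u ·‖ₑ) (x + t • (z - x)) := by
  set φ : ℝ → E := fun t => x + t • (z - x)
  have hφΩ : ∀ t ∈ Icc (0 : ℝ) 1, φ t ∈ Ω := fun t ht => hΩc.add_smul_sub_mem hx hz ht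
  have hderiv : ∀ t ∈ Icc (0 : ℝ) 1, HasDerivAt (u ∘ φ) (fderiv ℝ u (φ t) (z - x)) t :=
    fun t ht => ((hu.differentiableOn one_ne_zero).differentiableAt
      (hΩ.mem_nhds (hφΩ t ht))).hasFDerivAt.comp_hasDerivAt t
      (by simpa only [one_smul] using ((hasDerivAt_id' t).smul_const (z - x)).const_add x)
  obtain ⟨a, b, ha₀, hab, hb₁, hua, hub, hmid⟩ := exists_Ioo_strictly_between_levels zero_le_one
    (fun t ht => (hderiv t ht).continuousAt.continuousWithinAt)
    (by simpa [φ] using hxk) (by simpa [φ] using hzl) hkl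
  have hIcc : Icc a b ⊆ Icc 0 1 := Icc_subset_Icc ha₀ hb₁
  have hsub : uIcc a b ⊆ Icc 0 1 := uIcc_of_le hab.le ▸ hIcc
  have hFTC : ∫ t in a..b, fderiv ℝ u (φ t) (z - x) = u (φ b) - u (φ a) :=
    intervalIntegral.integral_eq_sub_of_hasDerivAt (fun t ht => hderiv t (hsub ht))
      (ContinuousOn.intervalIntegrable (((hu.continuousOn_fderiv_of_isOpen hΩ le_rfl).comp
        (by fun_prop) (fun t ht => hφΩ t (hsub ht))).clm_apply continuousOn_const))
  calc ENNReal.ofReal (l - k)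
      ≤ ENNReal.ofReal (∫ t in a..b, fderiv ℝ u (φ t) (z - x)) :=
        ENNReal.ofReal_le_ofReal (by simp only [hFTC, Function.comp_apply] at hua hub ⊢; linarith)
    _ ≤ ∫⁻ t in Ioc a b, ‖fderiv ℝ u (φ t) (z - x)‖ₑ := by
        rw [intervalIntegral.integral_of_le hab.le]
        exact (Real.ofReal_le_enorm _).trans (enorm_integral_le_lintegral_enorm _)
    _ ≤ ∫⁻ t in Ioo a b, edist x z *
          ({w ∈ Ω | u w < l} \ {w ∈ Ω | u w < k}).indicator (‖fderiv ℝ u ·‖ₑ) (φ t) := by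
        rw [← setLIntegral_congr Ioo_ae_eq_Ioc]
        refine setLIntegral_mono' measurableSet_Ioo fun t ht => ?_
        have hφt : φ t ∈ {w ∈ Ω | u w < l} \ {w ∈ Ω | u w < k} :=
          ⟨⟨hφΩ t (hIcc (Ioo_subset_Icc_self ht)), (hmid t ht).2⟩,
            fun h => (hmid t ht).1.not_gt h.2⟩
        rw [indicator_of_mem hφt, mul_comm, edist_comm, edist_eq_enorm_sub]
        exact ContinuousLinearMap.le_opENorm _ _
    _ ≤ ∫⁻ t in Ioo 0 1, edist x z *
          ({w ∈ Ω | u w < l} \ {w ∈ Ω | u w < k}).indicator (‖fderiv ℝ u ·‖ₑ) (φ t) :=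
        lintegral_mono_set (Ioo_subset_Ioo ha₀ hb₁)
    _ = _ := lintegral_const_mul' _ _ (edist_ne_top _ _)

theorem norm_gradient {F : Type*} [NormedAddCommGroup F] [InnerProductSpace ℝ F]
    [CompleteSpace F] (f : F → ℝ) (x : F) : ‖gradient f x‖ = ‖fderiv ℝ f x‖ :=
  (InnerProductSpace.toDual ℝ F).symm.norm_map _

theorem ContDiffOn.integrableOn_fderiv_ball {E F : Type*} [NormedAddCommGroup E]
    [NormedSpace ℝ E] [ProperSpace E] [MeasurableSpace E] [OpensMeasurableSpace E]
    (μ : Measure E) [IsFiniteMeasureOnCompacts μ] [NormedAddCommGroup F] [NormedSpace ℝ F]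
    {u : E → F} {y : E} {r : ℝ} (hr : 0 < r)
    (hu : ContDiffOn ℝ 1 u (closedBall y r)) : IntegrableOn (fderiv ℝ u) (ball y r) μ := by
  have hUD : UniqueDiffOn ℝ (closedBall y r) := uniqueDiffOn_convex (convex_closedBall y r)
    (by rw [interior_closedBall y hr.ne']; exact nonempty_ball.2 hr)
  refine (((hu.continuousOn_fderivWithin hUD le_rfl).integrableOn_compact
    (isCompact_closedBall y r)).mono_set ball_subset_closedBall).congr_fun
    (fun w hw => fderivWithin_of_mem_nhds ?_) measurableSet_ball
  exact Filter.mem_of_superset (isOpen_ball.mem_nhds hw) ball_subset_closedBall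

section AddHaar

variable {E : Type*} [NormedAddCommGroup E] [NormedSpace ℝ E] [FiniteDimensional ℝ E]
  [MeasurableSpace E] [BorelSpace E] (μ : Measure E) [μ.IsAddHaarMeasure]

theorem lintegral_comp_add_smul (G : E → ℝ≥0∞) (c : E) {t : ℝ} (ht : t ≠ 0) :
    ∫⁻ z, G (c + t • z) ∂μ = ENNReal.ofReal |(t ^ finrank ℝ E)⁻¹| * ∫⁻ z, G z ∂μ := by
  calc ∫⁻ z, G (c + t • z) ∂μ = ∫⁻ w, G (c + w) ∂(μ.map (t • ·)) :=
        (lintegral_map_equiv (fun w => G (c + w)) (MeasurableEquiv.smul₀ t ht)).symm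
    _ = ENNReal.ofReal |(t ^ finrank ℝ E)⁻¹| * ∫⁻ z, G z ∂μ := by
        rw [Measure.map_addHaar_smul μ ht, lintegral_smul_measure, smul_eq_mul,
          lintegral_add_left_eq_self]

theorem lintegral_comp_add_smul_sub_le (G : E → ℝ≥0∞) (x : E) {t : ℝ} (ht : 1 / 2 ≤ t) :
    ∫⁻ z, G (x + t • (z - x)) ∂μ ≤ 2 ^ finrank ℝ E * ∫⁻ z, G z ∂μ := by
  have ht₀ : 0 < t := by linarith
  have hinv : ((t ^ finrank ℝ E)⁻¹) ≤ 2 ^ finrank ℝ E := by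
    rw [← inv_pow]
    exact pow_le_pow_left₀ (by positivity) (inv_le_of_inv_le₀ (by norm_num) (by linarith)) _
  calc ∫⁻ z, G (x + t • (z - x)) ∂μ = ∫⁻ z, G ((x - t • x) + t • z) ∂μ := by
        congr! 3 with z; module
    _ = ENNReal.ofReal |(t ^ finrank ℝ E)⁻¹| * ∫⁻ z, G z ∂μ :=
        lintegral_comp_add_smul μ G _ ht₀.ne'
    _ ≤ 2 ^ finrank ℝ E * ∫⁻ z, G z ∂μ := by
        gcongr
        rw [abs_of_pos (by positivity)]
        exact (ENNReal.ofReal_le_ofReal hinv).trans_eq (by simp)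

theorem lintegral_lintegral_comp_add_smul_sub_le {G : E → ℝ≥0∞} (hG : Measurable G)
    (s s' : Set E) (t : ℝ) :
    ∫⁻ x in s, ∫⁻ z in s', G (x + t • (z - x)) ∂μ ∂μ ≤
      2 ^ finrank ℝ E * max (μ s) (μ s') * ∫⁻ z, G z ∂μ := by
  rcases le_or_gt (1 / 2) t with ht | ht
  · calc ∫⁻ x in s, ∫⁻ z in s', G (x + t • (z - x)) ∂μ ∂μ
        ≤ ∫⁻ _ in s, 2 ^ finrank ℝ E * ∫⁻ z, G z ∂μ ∂μ := lintegral_mono fun x =>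
          (setLIntegral_le_lintegral _ _).trans (lintegral_comp_add_smul_sub_le μ G x ht)
      _ ≤ 2 ^ finrank ℝ E * max (μ s) (μ s') * ∫⁻ z, G z ∂μ := by
          rw [setLIntegral_const, mul_right_comm]; gcongr; exact le_max_left _ _
  · rw [lintegral_lintegral_swap (f := fun x z => G (x + t • (z - x)))
      (hG.comp (by fun_prop : Measurable fun p : E × E => p.1 + t • (p.2 - p.1))).aemeasurable]
    calc ∫⁻ z in s', ∫⁻ x in s, G (x + t • (z - x)) ∂μ ∂μ
        = ∫⁻ z in s', ∫⁻ x in s, G (z + (1 - t) • (x - z)) ∂μ ∂μ := by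
          congr! 5; module
      _ ≤ ∫⁻ _ in s', 2 ^ finrank ℝ E * ∫⁻ z, G z ∂μ ∂μ := lintegral_mono fun z =>
          (setLIntegral_le_lintegral _ _).trans
            (lintegral_comp_add_smul_sub_le μ G z (by linarith))
      _ ≤ 2 ^ finrank ℝ E * max (μ s) (μ s') * ∫⁻ z, G z ∂μ := by
          rw [setLIntegral_const, mul_right_comm]; gcongr; exact le_max_right _ _

theorem Convex.measure_sublevel_mul_measure_superlevel_le {u : E → ℝ} {Ω : Set E}
    (hΩc : Convex ℝ Ω) (hΩ : IsOpen Ω) (hu : ContDiffOn ℝ 1 u Ω) {k l : ℝ} (hkl : k < l) :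
    ENNReal.ofReal (l - k) * μ {x ∈ Ω | u x < k} * μ (Ω \ {x ∈ Ω | u x < l}) ≤
      2 ^ finrank ℝ E * ediam Ω * μ Ω *
        ∫⁻ x in {x ∈ Ω | u x < l} \ {x ∈ Ω | u x < k}, ‖fderiv ℝ u x‖ₑ ∂μ := by
  have hopen (m : ℝ) : IsOpen {x ∈ Ω | u x < m} :=
    hu.continuousOn.isOpen_inter_preimage hΩ isOpen_Iio
  set S₁ := {x ∈ Ω | u x < k}
  set S₂ := Ω \ {x ∈ Ω | u x < l}
  have hD : MeasurableSet ({x ∈ Ω | u x < l} \ S₁) :=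
    (hopen l).measurableSet.diff (hopen k).measurableSet
  set G := ({x ∈ Ω | u x < l} \ S₁).indicator (‖fderiv ℝ u ·‖ₑ)
  have hG : Measurable G := (measurable_fderiv ℝ u).enorm.indicator hD
  have hG₂ (t : ℝ) : Measurable fun p : E × E => G (p.1 + t • (p.2 - p.1)) :=
    hG.comp (by fun_prop)
  calc ENNReal.ofReal (l - k) * μ S₁ * μ S₂
      = ∫⁻ x in S₁, ∫⁻ z in S₂, ENNReal.ofReal (l - k) ∂μ ∂μ := by
        rw [setLIntegral_const, setLIntegral_const, mul_right_comm]
    _ ≤ ∫⁻ x in S₁, ∫⁻ z in S₂, ∫⁻ t in Ioo (0 : ℝ) 1,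
          ediam Ω * G (x + t • (z - x)) ∂volume ∂μ ∂μ := by
        refine setLIntegral_mono' (hopen k).measurableSet fun x hx =>
          setLIntegral_mono' (hΩ.measurableSet.diff (hopen l).measurableSet) fun z hz => ?_
        have hGxz : Measurable fun t : ℝ => G (x + t • (z - x)) := hG.comp (by fun_prop)
        rw [lintegral_const_mul _ hGxz]
        exact (ofReal_sub_le_edist_mul_lintegral_segment hΩ hΩc hu hx.1 hz.1 hx.2.le
          (not_lt.1 fun h => hz.2 ⟨hz.1, h⟩) hkl).trans
          (by gcongr; exact edist_le_ediam_of_mem hx.1 hz.1)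
    _ = ∫⁻ t in Ioo (0 : ℝ) 1, ∫⁻ x in S₁, ∫⁻ z in S₂, ediam Ω * G (x + t • (z - x)) ∂μ ∂μ :=
        lintegral_lintegral_lintegral_rotate ((hG.comp
          (by fun_prop : Measurable fun p : E × E × ℝ => p.1 + p.2.2 • (p.2.1 - p.1))).const_mul _)
    _ ≤ ∫⁻ _ in Ioo (0 : ℝ) 1, ediam Ω * (2 ^ finrank ℝ E * μ Ω * ∫⁻ w, G w ∂μ) := by
        refine lintegral_mono fun t => ?_
        calc ∫⁻ x in S₁, ∫⁻ z in S₂, ediam Ω * G (x + t • (z - x)) ∂μ ∂μ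
            = ediam Ω * ∫⁻ x in S₁, ∫⁻ z in S₂, G (x + t • (z - x)) ∂μ ∂μ := by
              rw [← lintegral_const_mul _ (hG₂ t).lintegral_prod_right']
              exact lintegral_congr fun x =>
                lintegral_const_mul _ ((hG₂ t).comp measurable_prodMk_left)
          _ ≤ ediam Ω * (2 ^ finrank ℝ E * max (μ S₁) (μ S₂) * ∫⁻ w, G w ∂μ) := by
              gcongr; exact lintegral_lintegral_comp_add_smul_sub_le μ hG S₁ S₂ t
          _ ≤ ediam Ω * (2 ^ finrank ℝ E * μ Ω * ∫⁻ w, G w ∂μ) := by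
              gcongr
              exact max_le (measure_mono fun x hx => hx.1) (measure_mono sdiff_subset)
    _ = 2 ^ finrank ℝ E * ediam Ω * μ Ω * ∫⁻ x in {x ∈ Ω | u x < l} \ S₁, ‖fderiv ℝ u x‖ₑ ∂μ := by
        rw [setLIntegral_const, Real.volume_Ioo, lintegral_indicator hD]
        simp only [sub_zero, ENNReal.ofReal_one, mul_one]; ring

end AddHaar

theorem stmt_9_general (n : ℕ) :
    ∃ γ : ℝ, 0 < γ ∧
      ∀ (y : EuclideanSpace ℝ (Fin n)) (r : ℝ) (u : EuclideanSpace ℝ (Fin n) → ℝ)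
        (k l : ℝ), 0 < r →
        ContDiffOn ℝ 1 u (Metric.closedBall y r) → k < l →
        (l - k) * (volume {x ∈ Metric.ball y r | u x < k}).toReal *
            (volume (Metric.ball y r \ {x ∈ Metric.ball y r | u x < l})).toReal ≤
          γ * r ^ (n + 1) *
            ∫ x in {x ∈ Metric.ball y r | u x < l} \ {x ∈ Metric.ball y r | u x < k},
              ‖gradient u x‖ := by
  set c := (volume (ball (0 : EuclideanSpace ℝ (Fin n)) 1)).toReal
  have hc : 0 < c := ENNReal.toReal_pos (measure_ball_pos _ _ one_pos).ne' measure_ball_lt_top.ne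
  refine ⟨2 ^ (n + 1) * c, by positivity, fun y r u k l hr hu hkl => ?_⟩
  have hvol : volume (ball y r) = ENNReal.ofReal (r ^ n * c) := by
    rw [Measure.addHaar_ball_of_pos volume y hr, finrank_euclideanSpace_fin,
      ENNReal.ofReal_mul (by positivity), ENNReal.ofReal_toReal measure_ball_lt_top.ne]
  have hdiam : ediam (ball y r) ≤ ENNReal.ofReal (2 * r) :=
    ediam_le_of_forall_dist_le fun a ha b hb =>
      (dist_triangle_right a b y).trans (by linarith [mem_ball.1 ha, mem_ball.1 hb])
  have hint := ((hu.integrableOn_fderiv_ball volume hr).mono_set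
    (fun x hx => hx.1.1 : {x ∈ ball y r | u x < l} \ {x ∈ ball y r | u x < k} ⊆ ball y r))
  have key := (convex_ball y r).measure_sublevel_mul_measure_superlevel_le volume isOpen_ball
    (hu.mono ball_subset_closedBall) hkl
  rw [finrank_euclideanSpace_fin, hvol, ← ofReal_integral_norm_eq_lintegral_enorm hint] at key
  simp only [norm_gradient]
  rw [← ENNReal.toReal_ofReal (sub_nonneg.2 hkl.le), ← ENNReal.toReal_mul, ← ENNReal.toReal_mul]
  have hI : 0 ≤ ∫ x in {x ∈ ball y r | u x < l} \ {x ∈ ball y r | u x < k}, ‖fderiv ℝ u x‖ :=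
    integral_nonneg fun _ => norm_nonneg _
  refine ENNReal.toReal_le_of_le_ofReal (by positivity) (key.trans ?_)
  calc _ ≤ ENNReal.ofReal 2 ^ n * ENNReal.ofReal (2 * r) * ENNReal.ofReal (r ^ n * c) *
        ENNReal.ofReal (∫ x in {x ∈ ball y r | u x < l} \ {x ∈ ball y r | u x < k},
          ‖fderiv ℝ u x‖) := by rw [ENNReal.ofReal_ofNat]; gcongr
    _ = _ := by
        rw [← ENNReal.ofReal_pow zero_le_two, ← ENNReal.ofReal_mul (by positivity),
          ← ENNReal.ofReal_mul (by positivity), ← ENNReal.ofReal_mul (by positivity)]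
        ring_nf

/-- De Giorgi–Poincaré lemma (Lemma 2.1 of the paper), stated for continuously
differentiable functions. -/
theorem stmt_9 (n : ℕ) (hn : 1 ≤ n) :
    ∃ γ : ℝ, 0 < γ ∧
      ∀ (y : EuclideanSpace ℝ (Fin n)) (r : ℝ) (u : EuclideanSpace ℝ (Fin n) → ℝ)
        (k l : ℝ), 0 < r →
        ContDiffOn ℝ 1 u (Metric.closedBall y r) → k < l →
        (l - k) * (volume {x ∈ Metric.ball y r | u x < k}).toReal *
            (volume (Metric.ball y r \ {x ∈ Metric.ball y r | u x < l})).toReal ≤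
          γ * r ^ (n + 1) *
            ∫ x in {x ∈ Metric.ball y r | u x < l} \ {x ∈ Metric.ball y r | u x < k},
              ‖gradient u x‖ :=
  stmt_9_general n
end

section
/- Let n ≥ 1, let Ω ⊂ ℝⁿ be a bounded open set and set R = diam Ω. Let Q : [0,∞) → [0,∞) be increasing, convex and continuous with Q(0) = 0 and Q(s)/s ≤ Q(t)/t for all 0 < s ≤ t. Then for every function u : ℝⁿ → ℝ that is continuously differentiable and has compact support contained in Ω, one has ∫_Ω Q(|u(x)|/R) dx ≤ ∫_Ω Q(‖∇u(x)‖) dx. -/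
/-!
On a line `t ↦ z + t • e` with `‖e‖ = 1`, the function `f = u (z + t • e)` vanishes outside the
slice `S` of `Ω`, so the fundamental theorem of calculus gives `|f| ≤ ∫_S |f'|` everywhere, while
`|S| ≤ diam Ω = R`. Monotonicity of `Q` and Jensen's inequality for the average of `|f'|` over `S`
then give `∫_S Q(|f|/R) ≤ |S| · Q(⨍_S |f'|) ≤ ∫_S Q(|f'|) ≤ ∫_S Q(‖∇u‖)`. Integrating this over
the lines parallel to the first coordinate axis (Fubini) gives the theorem.
-/

open MeasureTheory Set Bornology

theorem Continuous.integrableOn_of_isBounded {X E : Type*} [PseudoMetricSpace X] [ProperSpace X]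
    [MeasurableSpace X] [OpensMeasurableSpace X] [NormedAddCommGroup E] {μ : Measure X}
    [IsLocallyFiniteMeasure μ] {f : X → E} (hf : Continuous f) {s : Set X} (hs : IsBounded s) :
    IntegrableOn f s μ :=
  (hf.locallyIntegrable.integrableOn_isCompact hs.isCompact_closure).mono_set subset_closure

theorem abs_le_setIntegral_abs_deriv {f : ℝ → ℝ} (hf : ContDiff ℝ 1 f) {S : Set ℝ}
    (hS : IsBounded S) (hsupp : tsupport f ⊆ S) (t : ℝ) :
    |f t| ≤ ∫ s in S, |deriv f s| := by
  obtain ⟨r, hr⟩ := (hS.insert t).subset_closedBall 0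
  have hbound : ∀ s ∈ insert t S, -r ≤ s ∧ s ≤ r := fun s hs => by
    simpa [abs_le] using hr hs
  have hSIoc : S ⊆ Ioc (-r - 1) (r + 1) := fun s hs => by
    have := hbound s (mem_insert_of_mem t hs); constructor <;> linarith
  have hfr : f (r + 1) = 0 := image_eq_zero_of_notMem_tsupport fun h => by
    linarith [(hbound _ (mem_insert_of_mem t (hsupp h))).2]
  have htr : t ≤ r + 1 := by linarith [(hbound t (mem_insert t S)).2]
  have hf' : Continuous (deriv f) := hf.continuous_deriv le_rfl
  calc |f t| = |∫ s in t..r + 1, deriv f s| := by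
        rw [intervalIntegral.integral_deriv_eq_sub (fun s _ => hf.differentiable one_ne_zero s)
          (hf'.intervalIntegrable _ _), hfr, zero_sub, abs_neg]
    _ ≤ ∫ s in t..r + 1, |deriv f s| := intervalIntegral.abs_integral_le_integral_abs htr
    _ = ∫ s in Ioc t (r + 1), |deriv f s| := intervalIntegral.integral_of_le htr
    _ ≤ ∫ s in Ioc (-r - 1) (r + 1), |deriv f s| := by
        refine setIntegral_mono_set (hf'.abs.integrableOn_Ioc) ?_ ?_
        · exact Filter.Eventually.of_forall fun s => abs_nonneg _
        · exact (Ioc_subset_Ioc_left (by linarith [(hbound t (mem_insert t S)).1])).eventuallyLE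
    _ = ∫ s in S, |deriv f s| := by
        refine setIntegral_eq_of_subset_of_forall_sdiff_eq_zero measurableSet_Ioc
          hSIoc fun s hs => ?_
        rw [abs_eq_zero]
        exact Function.notMem_support.1 fun h => hs.2 (hsupp (support_deriv_subset h))

theorem setIntegral_comp_abs_div_le_setIntegral_comp_abs_deriv {Q : ℝ → ℝ}
    (hQmono : MonotoneOn Q (Ici 0)) (hQconv : ConvexOn ℝ (Ici 0) Q)
    (hQcont : ContinuousOn Q (Ici 0)) {f : ℝ → ℝ} (hf : ContDiff ℝ 1 f) {S : Set ℝ}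
    (hS : IsBounded S) (hSm : MeasurableSet S) (hsupp : tsupport f ⊆ S) {R : ℝ}
    (hSR : volume S ≤ ENNReal.ofReal R) :
    ∫ t in S, Q (|f t| / R) ≤ ∫ t in S, Q |deriv f t| := by
  rcases eq_or_ne (volume S) 0 with hS0 | hS0
  · simp [Measure.restrict_eq_zero.2 hS0]
  have hSfin : volume S ≠ ⊤ := hS.measure_lt_top.ne
  have hℓ : 0 < volume.real S := ENNReal.toReal_pos hS0 hSfin
  have hR : 0 ≤ R := le_of_not_gt fun hR => hS0 <|
    le_antisymm (hSR.trans (ENNReal.ofReal_of_nonpos hR.le).le) bot_le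
  have hℓR : volume.real S ≤ R := ENNReal.toReal_le_of_le_ofReal hR hSR
  have hf' : Continuous fun t => |deriv f t| := (hf.continuous_deriv le_rfl).abs
  have hQf' : Continuous fun t => Q |deriv f t| :=
    hQcont.comp_continuous hf' fun t => mem_Ici.2 (abs_nonneg _)
  have hjensen : Q (⨍ t in S, |deriv f t|) ≤ ⨍ t in S, Q |deriv f t| :=
    hQconv.map_set_average_le hQcont isClosed_Ici hS0 hSfin
      (Filter.Eventually.of_forall fun t => mem_Ici.2 (abs_nonneg _))
      (hf'.integrableOn_of_isBounded hS) (hQf'.integrableOn_of_isBounded hS)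
  have havg : ⨍ t in S, |deriv f t| = (∫ t in S, |deriv f t|) / volume.real S := by
    rw [setAverage_eq, smul_eq_mul, inv_mul_eq_div]
  have hint_nonneg : 0 ≤ ∫ t in S, |deriv f t| := setIntegral_nonneg hSm fun s _ => abs_nonneg _
  have hpointwise : ∀ t ∈ S, Q (|f t| / R) ≤ ⨍ t in S, Q |deriv f t| := fun t _ => by
    refine (hQmono (div_nonneg (abs_nonneg _) hR) ?_ ?_).trans hjensen
    · exact havg ▸ div_nonneg hint_nonneg hℓ.le
    · exact havg ▸
        div_le_div₀ hint_nonneg (abs_le_setIntegral_abs_deriv hf hS hsupp t) hℓ hℓR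
  calc ∫ t in S, Q (|f t| / R) ≤ ∫ _ in S, ⨍ t in S, Q |deriv f t| :=
        setIntegral_mono_on
          ((hQcont.comp_continuous (hf.continuous.abs.div_const R)
            fun t => div_nonneg (abs_nonneg _) hR).integrableOn_of_isBounded hS)
          (integrableOn_const hSfin) hSm hpointwise
    _ = ∫ t in S, Q |deriv f t| := by rw [setIntegral_const, measure_smul_setAverage _ hSfin]

theorem isometry_add_smul_right {F : Type*} [NormedAddCommGroup F] [NormedSpace ℝ F] (z : F)
    {e : F} (he : ‖e‖ = 1) :
    Isometry fun t : ℝ => z + t • e :=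
  Isometry.of_dist_eq fun s t => by
    rw [dist_add_left, dist_eq_norm, ← sub_smul, norm_smul, he, mul_one, Real.dist_eq,
      Real.norm_eq_abs]

section

variable {E : Type*} [NormedAddCommGroup E] [InnerProductSpace ℝ E] [CompleteSpace E]

theorem ContDiff.continuous_gradient {u : E → ℝ} (hu : ContDiff ℝ 1 u) :
    Continuous (gradient u) :=
  (InnerProductSpace.toDual ℝ E).symm.continuous.comp (hu.continuous_fderiv one_ne_zero)

theorem setIntegral_line_comp_abs_div_diam_le {Q : ℝ → ℝ}
    (hQmono : MonotoneOn Q (Ici 0)) (hQconv : ConvexOn ℝ (Ici 0) Q)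
    (hQcont : ContinuousOn Q (Ici 0)) {Ω : Set E} (hΩo : IsOpen Ω) (hΩb : IsBounded Ω)
    {u : E → ℝ} (hu : ContDiff ℝ 1 u) (husupp : tsupport u ⊆ Ω) (z : E) {e : E}
    (he : ‖e‖ = 1) :
    ∫ t in (fun t : ℝ => z + t • e) ⁻¹' Ω, Q (|u (z + t • e)| / Metric.diam Ω)
      ≤ ∫ t in (fun t : ℝ => z + t • e) ⁻¹' Ω, Q ‖gradient u (z + t • e)‖ := by
  set L : ℝ → E := fun t => z + t • e
  have hL : Isometry L := isometry_add_smul_right z he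
  have hS : IsBounded (L ⁻¹' Ω) := hL.antilipschitz.isBounded_preimage hΩb
  have hSm : MeasurableSet (L ⁻¹' Ω) := (hΩo.preimage hL.continuous).measurableSet
  have hLsmooth : ContDiff ℝ 1 L := contDiff_const.add (contDiff_id.smul contDiff_const)
  have hLderiv (t : ℝ) : HasDerivAt L e t := by
    simpa [L] using ((hasDerivAt_id t).smul_const e).const_add z
  have hderiv (t : ℝ) : deriv (u ∘ L) t = inner ℝ (gradient u (L t)) e := by
    rw [inner_gradient_left]
    exact ((hu.differentiable one_ne_zero (L t)).hasFDerivAt.comp_hasDerivAt t (hLderiv t)).deriv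
  have hvol : volume (L ⁻¹' Ω) ≤ ENNReal.ofReal (Metric.diam Ω) :=
    (Real.volume_le_diam _).trans <| Metric.ediam_le_of_forall_dist_le fun s hs t ht =>
      hL.dist_eq s t ▸ Metric.dist_le_diam_of_mem hΩb hs ht
  calc ∫ t in L ⁻¹' Ω, Q (|u (L t)| / Metric.diam Ω)
      ≤ ∫ t in L ⁻¹' Ω, Q |deriv (u ∘ L) t| :=
        setIntegral_comp_abs_div_le_setIntegral_comp_abs_deriv hQmono hQconv hQcont
          (hu.comp hLsmooth) hS hSm
          ((tsupport_comp_subset_preimage u hL.continuous).trans (preimage_mono husupp)) hvol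
    _ ≤ ∫ t in L ⁻¹' Ω, Q ‖gradient u (L t)‖ := by
        refine setIntegral_mono_on ?_ ?_ hSm fun t _ => hQmono (mem_Ici.2 (abs_nonneg _))
          (mem_Ici.2 (norm_nonneg _)) ?_
        · exact (hQcont.comp_continuous ((hu.comp hLsmooth).continuous_deriv le_rfl).abs
            fun t => mem_Ici.2 (abs_nonneg _)).integrableOn_of_isBounded hS
        · exact (hQcont.comp_continuous (hu.continuous_gradient.comp hL.continuous).norm
            fun t => mem_Ici.2 (norm_nonneg _)).integrableOn_of_isBounded hS
        · rw [hderiv]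
          exact (abs_real_inner_le_norm _ _).trans (by rw [he, mul_one])

end

theorem toLp_cons_eq_add_smul_single {m : ℕ} (t : ℝ) (y : Fin m → ℝ) :
    (WithLp.toLp 2 (Fin.cons t y : Fin (m + 1) → ℝ) : EuclideanSpace ℝ (Fin (m + 1)))
      = WithLp.toLp 2 (Fin.cons 0 y) + t • EuclideanSpace.single 0 1 := by
  ext i
  refine Fin.cases ?_ (fun j => ?_) i <;> simp

theorem integral_le_integral_of_forall_integral_line_le {m : ℕ}
    {F G : EuclideanSpace ℝ (Fin (m + 1)) → ℝ} (hF : Integrable F) (hG : Integrable G)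
    (h : ∀ z, ∫ t : ℝ, F (z + t • EuclideanSpace.single 0 1)
      ≤ ∫ t : ℝ, G (z + t • EuclideanSpace.single 0 1)) :
    ∫ x, F x ≤ ∫ x, G x := by
  let ψ : EuclideanSpace ℝ (Fin (m + 1)) ≃ᵐ ℝ × (Fin m → ℝ) :=
    (MeasurableEquiv.toLp 2 (Fin (m + 1) → ℝ)).symm.trans
      (MeasurableEquiv.piFinSuccAbove (fun _ => ℝ) 0)
  have hψ : MeasurePreserving ψ.symm :=
    ((volume_preserving_piFinSuccAbove (fun _ => ℝ) 0).comp
      (EuclideanSpace.volume_preserving_symm_measurableEquiv_toLp (Fin (m + 1)))).symm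
  have hψ_apply (t : ℝ) (y : Fin m → ℝ) :
      ψ.symm (t, y) = WithLp.toLp 2 (Fin.cons 0 y) + t • EuclideanSpace.single 0 1 := by
    change WithLp.toLp 2 (Fin.insertNth (α := fun _ => ℝ) 0 t y) = _
    rw [Fin.insertNth_zero', toLp_cons_eq_add_smul_single]
  have hcomp {H : EuclideanSpace ℝ (Fin (m + 1)) → ℝ} (hH : Integrable H) :
      Integrable (fun p => H (ψ.symm p)) (volume.prod volume) :=
    (hψ.integrable_comp_emb ψ.symm.measurableEmbedding).2 hH
  rw [← hψ.integral_comp ψ.symm.measurableEmbedding,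
    ← hψ.integral_comp ψ.symm.measurableEmbedding, Measure.volume_eq_prod,
    integral_prod_symm _ (hcomp hF), integral_prod_symm _ (hcomp hG)]
  refine integral_mono (hcomp hF).integral_prod_right (hcomp hG).integral_prod_right fun y => ?_
  simpa only [hψ_apply] using h _

theorem stmt_10_general (n : ℕ) (hn : 1 ≤ n)
    (Ω : Set (EuclideanSpace ℝ (Fin n))) (hΩopen : IsOpen Ω)
    (hΩbdd : Bornology.IsBounded Ω)
    (Q : ℝ → ℝ)
    (hQmono : MonotoneOn Q (Set.Ici 0))
    (hQconv : ConvexOn ℝ (Set.Ici 0) Q)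
    (hQcont : ContinuousOn Q (Set.Ici 0))
    (u : EuclideanSpace ℝ (Fin n) → ℝ)
    (hu : ContDiff ℝ 1 u)
    (husuppΩ : tsupport u ⊆ Ω) :
    ∫ x in Ω, Q (|u x| / Metric.diam Ω) ≤ ∫ x in Ω, Q ‖gradient u x‖ := by
  obtain ⟨m, rfl⟩ := Nat.exists_eq_add_of_le' hn
  have hΩm : MeasurableSet Ω := hΩopen.measurableSet
  have hlhs : Continuous fun x => Q (|u x| / Metric.diam Ω) :=
    hQcont.comp_continuous (hu.continuous.abs.div_const _)
      fun x => mem_Ici.2 (div_nonneg (abs_nonneg _) Metric.diam_nonneg)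
  have hrhs : Continuous fun x => Q ‖gradient u x‖ :=
    hQcont.comp_continuous hu.continuous_gradient.norm fun x => mem_Ici.2 (norm_nonneg _)
  rw [← integral_indicator hΩm, ← integral_indicator hΩm]
  refine integral_le_integral_of_forall_integral_line_le
    ((hlhs.integrableOn_of_isBounded hΩbdd).integrable_indicator hΩm)
    ((hrhs.integrableOn_of_isBounded hΩbdd).integrable_indicator hΩm) fun z => ?_
  have hline (H : EuclideanSpace ℝ (Fin (m + 1)) → ℝ) :
      ∫ t : ℝ, Ω.indicator H (z + t • EuclideanSpace.single 0 1)
        = ∫ t in (fun t : ℝ => z + t • EuclideanSpace.single 0 1) ⁻¹' Ω,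
            H (z + t • EuclideanSpace.single 0 1) := by
    simp_rw [← indicator_comp_right]
    exact integral_indicator (hΩopen.preimage (by fun_prop)).measurableSet
  rw [hline, hline]
  exact setIntegral_line_comp_abs_div_diam_le hQmono hQconv hQcont hΩopen hΩbdd hu husuppΩ z
    (by simp)

/-- Lieberman's lemma (Lemma 2.3 of the paper), stated for continuously
differentiable functions with compact support in `Ω`. -/
theorem stmt_10 (n : ℕ) (hn : 1 ≤ n)
    (Ω : Set (EuclideanSpace ℝ (Fin n))) (hΩopen : IsOpen Ω)
    (hΩbdd : Bornology.IsBounded Ω)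
    (Q : ℝ → ℝ)
    (hQmono : MonotoneOn Q (Set.Ici 0))
    (hQconv : ConvexOn ℝ (Set.Ici 0) Q)
    (hQcont : ContinuousOn Q (Set.Ici 0))
    (hQ0 : Q 0 = 0)
    (hQslope : ∀ s t : ℝ, 0 < s → s ≤ t → Q s / s ≤ Q t / t)
    (u : EuclideanSpace ℝ (Fin n) → ℝ)
    (hu : ContDiff ℝ 1 u) (husupp : HasCompactSupport u)
    (husuppΩ : tsupport u ⊆ Ω) :
    ∫ x in Ω, Q (|u x| / Metric.diam Ω) ≤ ∫ x in Ω, Q ‖gradient u x‖ :=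
  stmt_10_general n hn Ω hΩopen hΩbdd Q hQmono hQconv hQcont u hu husuppΩ
end
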